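/- Let A = (a_{mn})_{m,n∈ℤ} be a complex matrix in Σ_α (summable α-slants: ∑_{j∈ℤ} sup_m |a_{m,⌈αm⌉+j}| < ∞) with α > 1. Then 0 is an approximate eigenvalue of A on ℓ^p(ℤ,ℂ) for every p ∈ [1,∞]: for every ε > 0 there exists x ∈ ℓ^p with ‖x‖_p = 1 and ‖Ax‖_p ≤ ε. In particular, A is not bounded below on any ℓ^p. -/

import Mathlib

/-!
Cutting the band `|n - ⌈α m⌉| ≤ M` out of `A` leaves the slants `j` with `|j| > M`; each is a
weighted shift along the injective map `m ↦ ⌈α m⌉ + j`, so on every `ℓ^p` the remainder has norm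
at most `∑_{|j| > M} r j`, which is below `ε` for large `M`. The band itself has a unit kernel
vector: because `α > 1`, the `L` columns `0, …, L - 1` meet only about `(L + 2M) / α + 1 < L`
rows of the band, so a nonzero vector supported there is annihilated by the whole band.
-/

open scoped ENNReal

open Finset Function

theorem Summable.tsum_eq_tsum_indicator_compl {β G : Type*} [AddCommGroup G] [TopologicalSpace G]
    [IsTopologicalAddGroup G] [T2Space G] {f : β → G} (hf : Summable f) {s : Finset β}
    (hs : ∑ j ∈ s, f j = 0) : ∑' j, f j = ∑' j, (↑s : Set β)ᶜ.indicator f j := by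
  rw [← hf.sum_add_tsum_compl, hs, zero_add, _root_.tsum_subtype]

section lp

variable {ι κ : Type*} {p : ℝ≥0∞}

theorem Memℓp.comp_injective {E : Type*} [NormedAddCommGroup E] {f : κ → E} (hf : Memℓp f p)
    {g : ι → κ} (hg : Injective g) : Memℓp (f ∘ g) p := by
  obtain rfl | rfl | hp := p.trichotomy
  · exact memℓp_zero ((memℓp_zero_iff.1 hf).preimage hg.injOn)
  · exact memℓp_infty ((memℓp_infty_iff.1 hf).mono (Set.range_comp_subset_range g fun k => ‖f k‖))
  · exact (memℓp_gen_iff hp).2 (((memℓp_gen_iff hp).1 hf).comp_injective hg)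

theorem lp.norm_comp_injective_le {E : Type*} [NormedAddCommGroup E] (hp : p ≠ 0)
    (w : lp (fun _ : κ => E) p) {g : ι → κ} (hg : Injective g) :
    ‖(⟨w ∘ g, (lp.memℓp w).comp_injective hg⟩ : lp (fun _ : ι => E) p)‖ ≤ ‖w‖ := by
  obtain rfl | rfl | hp' := p.trichotomy
  · exact absurd rfl hp
  · exact lp.norm_le_of_forall_le (lp.norm_nonneg' w) fun i => lp.norm_apply_le_norm hp w (g i)
  · refine lp.norm_le_of_forall_sum_le hp' (lp.norm_nonneg' w) fun s => ?_
    calc ∑ i ∈ s, ‖w (g i)‖ ^ p.toReal = ∑ k ∈ s.map ⟨g, hg⟩, ‖w k‖ ^ p.toReal :=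
          (sum_map s ⟨g, hg⟩ fun k => ‖w k‖ ^ p.toReal).symm
      _ ≤ ‖w‖ ^ p.toReal := lp.sum_rpow_le_norm_rpow hp' w _

variable {𝕜 : Type*} [RCLike 𝕜] [Fact (1 ≤ p)]

theorem lp.exists_norm_mul_comp_le (w : lp (fun _ : κ => 𝕜) p) {g : ι → κ} (hg : Injective g)
    (a : ι → 𝕜) {C : ℝ} (hC : 0 ≤ C) (ha : ∀ i, ‖a i‖ ≤ C) :
    ∃ h : (fun i => a i * w (g i)) ∈ lp (fun _ : ι => 𝕜) p,
      ‖(⟨_, h⟩ : lp (fun _ : ι => 𝕜) p)‖ ≤ C * ‖w‖ := by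
  have hp : p ≠ 0 := (zero_lt_one.trans_le Fact.out).ne'
  set v : lp (fun _ : ι => 𝕜) p := (C : 𝕜) • ⟨w ∘ g, (lp.memℓp w).comp_injective hg⟩
  have hv : ∀ i, ‖a i * w (g i)‖ ≤ ‖v i‖ := fun i => by
    rw [show v i = C * w (g i) from rfl, norm_mul, norm_mul, RCLike.norm_ofReal, abs_of_nonneg hC]
    gcongr
    exact ha i
  refine ⟨(lp.memℓp v).mono' hv, ?_⟩
  calc ‖(⟨_, (lp.memℓp v).mono' hv⟩ : lp (fun _ : ι => 𝕜) p)‖ ≤ ‖v‖ := lp.norm_mono hp hv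
    _ ≤ ‖(C : 𝕜)‖ * ‖(⟨w ∘ g, _⟩ : lp (fun _ : ι => 𝕜) p)‖ := norm_smul_le _ _
    _ ≤ C * ‖w‖ := by
      rw [RCLike.norm_ofReal, abs_of_nonneg hC]
      exact mul_le_mul_of_nonneg_left (lp.norm_comp_injective_le hp w hg) hC

theorem lp.exists_tsum_mul_comp_mem_norm_le {J : Type*} (g : J → ι → κ) (hg : ∀ j, Injective (g j))
    (a : ι → J → 𝕜) (r : J → ℝ) (hr0 : ∀ j, 0 ≤ r j) (hr : ∀ i j, ‖a i j‖ ≤ r j)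
    (hsum : Summable r) (x : lp (fun _ : κ => 𝕜) p) :
    ∃ h : (fun i => ∑' j, a i j * x (g j i)) ∈ lp (fun _ : ι => 𝕜) p,
      ‖(⟨_, h⟩ : lp (fun _ : ι => 𝕜) p)‖ ≤ (∑' j, r j) * ‖x‖ := by
  choose hY hYle using fun j =>
    lp.exists_norm_mul_comp_le x (hg j) (fun i => a i j) (hr0 j) (fun i => hr i j)
  set Y : J → lp (fun _ : ι => 𝕜) p := fun j => ⟨_, hY j⟩
  have hYsum : Summable fun j => ‖Y j‖ :=
    (hsum.mul_right ‖x‖).of_nonneg_of_le (fun _ => norm_nonneg _) hYle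
  have hcoe : (fun i => ∑' j, a i j * x (g j i)) = ⇑(∑' j, Y j) := funext fun i =>
    ((lp.evalCLM 𝕜 _ p i).map_tsum hYsum.of_norm).symm
  refine ⟨hcoe ▸ (∑' j, Y j).2, ?_⟩
  calc ‖(⟨_, hcoe ▸ (∑' j, Y j).2⟩ : lp (fun _ : ι => 𝕜) p)‖ = ‖∑' j, Y j‖ := by
        congr 1; exact Subtype.ext hcoe
    _ ≤ ∑' j, ‖Y j‖ := norm_tsum_le_tsum_norm hYsum
    _ ≤ ∑' j, r j * ‖x‖ := hYsum.tsum_le_tsum hYle (hsum.mul_right _)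
    _ = (∑' j, r j) * ‖x‖ := tsum_mul_right

theorem lp.tsum_mul_eq_tsum_indicator_compl_slant (a : ℤ → 𝕜) (c : ℤ) {r : ℤ → ℝ}
    (ha : ∀ j, ‖a (c + j)‖ ≤ r j) (hr : Summable r) (x : lp (fun _ : ℤ => 𝕜) p) {s : Finset ℤ}
    (hs : ∑ j ∈ s, a (c + j) * x (c + j) = 0) :
    ∑' n, a n * x n = ∑' j, (↑s : Set ℤ)ᶜ.indicator (fun j => a (c + j)) j * x (c + j) := by
  have hp : p ≠ 0 := (zero_lt_one.trans_le Fact.out).ne'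
  have hsum : Summable fun j => a (c + j) * x (c + j) :=
    (hr.mul_right ‖x‖).of_norm_bounded fun j => by
      rw [norm_mul]
      exact mul_le_mul (ha j) (lp.norm_apply_le_norm hp x _) (norm_nonneg _)
        ((norm_nonneg _).trans (ha j))
  rw [← (Equiv.addLeft c).tsum_eq]
  simp only [Equiv.coe_addLeft]
  rw [hsum.tsum_eq_tsum_indicator_compl hs]
  simp only [Set.indicator_mul_left]

end lp

theorem exists_tsum_indicator_compl_Icc_lt (r : ℤ → ℝ) {ε : ℝ} (hε : 0 < ε) :
    ∃ M : ℕ, ∑' j, (↑(Icc (-M : ℤ) M) : Set ℤ)ᶜ.indicator r j < ε := by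
  obtain ⟨M, hM⟩ :=
    (((tendsto_tsum_compl_atTop_zero r).comp tendsto_Icc_neg).eventually (gt_mem_nhds hε)).exists
  exact ⟨M, (_root_.tsum_subtype _ r).symm.trans_lt hM⟩

theorem Module.exists_ne_zero_forall_apply_eq_zero {K V ι : Type*} [Field K] [AddCommGroup V]
    [Module K V] [FiniteDimensional K V] (φ : ι → V →ₗ[K] K) (R : Finset ι)
    (hφ : ∀ i ∉ R, φ i = 0) (hR : #R < Module.finrank K V) : ∃ v : V, v ≠ 0 ∧ ∀ i, φ i v = 0 := by
  let f : V →ₗ[K] (R → K) := LinearMap.pi fun i => φ i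
  have hker : LinearMap.ker f ≠ ⊥ := LinearMap.ker_ne_bot_of_finrank_lt (by simpa using hR)
  obtain ⟨v, hv, hv0⟩ := (Submodule.ne_bot_iff _).1 hker
  refine ⟨v, hv0, fun i => ?_⟩
  by_cases hi : i ∈ R
  · exact congr_fun (LinearMap.mem_ker.1 hv) ⟨i, hi⟩
  · rw [hφ i hi, LinearMap.zero_apply]

theorem strictMono_ceil_mul {α : ℝ} (hα : 1 ≤ α) : StrictMono fun m : ℤ => ⌈α * m⌉ :=
  strictMono_int_of_lt_succ fun m => by
    rw [Int.lt_iff_add_one_le, ← Int.ceil_add_one]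
    exact Int.ceil_le_ceil (by push_cast; linarith)

theorem mem_Ioc_floor_of_ceil_mul_mem_Icc {α : ℝ} (hα : 0 < α) {a b m : ℤ}
    (h : ⌈α * m⌉ ∈ Icc a b) : m ∈ Ioc ⌊((a : ℝ) - 1) / α⌋ ⌊(b : ℝ) / α⌋ := by
  obtain ⟨ha, hb⟩ := mem_Icc.1 h
  rw [← Int.sub_one_lt_iff, Int.lt_ceil] at ha
  rw [Int.ceil_le] at hb
  rw [mem_Ioc, Int.floor_lt, Int.le_floor, div_lt_iff₀ hα, le_div_iff₀ hα]
  push_cast at ha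
  constructor <;> linarith

theorem card_Ioc_floor_le {x y : ℝ} (hxy : x ≤ y) : (#(Ioc ⌊x⌋ ⌊y⌋) : ℝ) ≤ y - x + 1 := by
  rw [Int.card_Ioc, ← Int.cast_natCast, Int.toNat_of_nonneg (sub_nonneg.2 (Int.floor_mono hxy))]
  push_cast
  linarith [Int.floor_le y, Int.lt_floor_add_one x]

theorem exists_finsupp_ne_zero_sum_slant_eq_zero {K : Type*} [Field K] {α : ℝ} (hα : 1 < α)
    (A : ℤ → ℤ → K) (M : ℕ) :
    ∃ x : ℤ →₀ K, x ≠ 0 ∧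
      ∀ m : ℤ, ∑ j ∈ Icc (-M : ℤ) M, A m (⌈α * m⌉ + j) * x (⌈α * m⌉ + j) = 0 := by
  have hα0 : 0 < α := zero_lt_one.trans hα
  obtain ⟨L, hL⟩ := exists_nat_gt ((2 * M + α) / (α - 1))
  let V := Finsupp.supported K K (↑(Ico (0 : ℤ) L) : Set ℤ)
  have : FiniteDimensional K V := (Finsupp.supportedEquivFinsupp _).symm.finiteDimensional
  have hV : Module.finrank K V = L := by
    rw [(Finsupp.supportedEquivFinsupp _).finrank_eq, Module.finrank_finsupp_self]
    simp
  let φ : ℤ → V →ₗ[K] K := fun m =>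
    (∑ j ∈ Icc (-M : ℤ) M, A m (⌈α * m⌉ + j) • Finsupp.lapply (⌈α * m⌉ + j)) ∘ₗ V.subtype
  have hφ : ∀ m (v : V),
      φ m v = ∑ j ∈ Icc (-M : ℤ) M, A m (⌈α * m⌉ + j) * (v : ℤ →₀ K) (⌈α * m⌉ + j) := by
    intro m v
    simp [φ]
  -- every row of the band that meets the columns `0, …, L - 1` lies in `R`
  let R := Ioc ⌊(((-M : ℤ) : ℝ) - 1) / α⌋ ⌊((L - 1 + M : ℤ) : ℝ) / α⌋
  have hR : #R < L := by
    have hcard := card_Ioc_floor_le (x := (((-M : ℤ) : ℝ) - 1) / α)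
      (y := ((L - 1 + M : ℤ) : ℝ) / α) (div_le_div_of_nonneg_right (by push_cast; linarith) hα0.le)
    have hlen : ((L - 1 + M : ℤ) : ℝ) / α - (((-M : ℤ) : ℝ) - 1) / α + 1
        = (L + 2 * M + α) / α := by
      push_cast
      field_simp
      ring
    rw [div_lt_iff₀ (by linarith)] at hL
    rw [hlen, le_div_iff₀ hα0] at hcard
    exact_mod_cast (show (#R : ℝ) < L by nlinarith)
  have hφR : ∀ m ∉ R, φ m = 0 := by
    intro m hm
    ext v
    rw [hφ, LinearMap.zero_apply]
    refine sum_eq_zero fun j hj => ?_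
    rw [(Finsupp.mem_supported' K _).1 v.2 _ fun hS => hm ?_, mul_zero]
    apply mem_Ioc_floor_of_ceil_mul_mem_Icc hα0
    simp only [coe_Ico, Set.mem_Ico, mem_Icc] at hS hj ⊢
    omega
  obtain ⟨v, hv0, hv⟩ :=
    Module.exists_ne_zero_forall_apply_eq_zero (V := V) φ R hφR (by rw [hV]; exact hR)
  exact ⟨v, by simpa using hv0, fun m => (hφ m v).symm.trans (hv m)⟩

theorem exists_lp_norm_eq_one_sum_slant_eq_zero {𝕜 : Type*} [RCLike 𝕜] (p : ℝ≥0∞) [Fact (1 ≤ p)]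
    {α : ℝ} (hα : 1 < α) (A : ℤ → ℤ → 𝕜) (M : ℕ) :
    ∃ x : lp (fun _ : ℤ => 𝕜) p, ‖x‖ = 1 ∧
      ∀ m : ℤ, ∑ j ∈ Icc (-M : ℤ) M, A m (⌈α * m⌉ + j) * x (⌈α * m⌉ + j) = 0 := by
  obtain ⟨x, hx0, hx⟩ := exists_finsupp_ne_zero_sum_slant_eq_zero hα A M
  let y : lp (fun _ : ℤ => 𝕜) p := ⟨⇑x, (memℓp_zero x.hasFiniteSupport).of_exponent_ge bot_le⟩
  have hy : y ≠ 0 := by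
    intro h
    apply hx0
    ext n
    exact congr_fun (congrArg (fun z : lp (fun _ : ℤ => 𝕜) p => (z : ℤ → 𝕜)) h) n
  refine ⟨(‖y‖⁻¹ : 𝕜) • y, norm_smul_inv_norm hy, fun m => ?_⟩
  simp only [lp.coeFn_smul, Pi.smul_apply, smul_eq_mul, mul_left_comm _ (‖y‖⁻¹ : 𝕜), ← mul_sum]
  rw [show ⇑y = ⇑x from rfl, hx m, mul_zero]

theorem slanted_matrix_zero_approximate_eigenvalue_general
    (α : ℝ) (hα : 1 < α)
    (A : ℤ → ℤ → ℂ) (r : ℤ → ℝ)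
    (hr : ∀ m j : ℤ, ‖A m (⌈α * (m : ℝ)⌉ + j)‖ ≤ r j)
    (hSum : Summable r)
    (p : ℝ≥0∞) [hp : Fact (1 ≤ p)]
    (ε : ℝ) (hε : 0 < ε) :
    ∃ x : lp (fun _ : ℤ => ℂ) p, ‖x‖ = 1 ∧
      ∃ hf : (fun m : ℤ => ∑' n : ℤ, A m n * (x : ℤ → ℂ) n) ∈ lp (fun _ : ℤ => ℂ) p,
        ‖(⟨fun m : ℤ => ∑' n : ℤ, A m n * (x : ℤ → ℂ) n, hf⟩ :
            lp (fun _ : ℤ => ℂ) p)‖ ≤ ε := by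
  obtain ⟨M, hM⟩ := exists_tsum_indicator_compl_Icc_lt r hε
  obtain ⟨x, hx1, hxker⟩ := exists_lp_norm_eq_one_sum_slant_eq_zero p hα A M
  set T : Set ℤ := (↑(Icc (-M : ℤ) M))ᶜ
  have hrow := fun m : ℤ =>
    lp.tsum_mul_eq_tsum_indicator_compl_slant (A m) ⌈α * m⌉ (hr m) hSum x (hxker m)
  obtain ⟨hf, hnorm⟩ := lp.exists_tsum_mul_comp_mem_norm_le (fun j (m : ℤ) => ⌈α * m⌉ + j)
    (fun j _ _ h => (strictMono_ceil_mul hα.le).injective (add_right_cancel h))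
    (fun (m : ℤ) j => T.indicator (fun j => A m (⌈α * m⌉ + j)) j) (T.indicator r)
    (fun j => Set.indicator_nonneg (fun j _ => (norm_nonneg _).trans (hr 0 j)) j)
    (fun m j => by
      rw [norm_indicator_eq_indicator_norm]
      exact Set.indicator_le_indicator (hr m j))
    (hSum.indicator T) x
  refine ⟨x, hx1, ?_⟩
  simp only [hrow]
  exact ⟨hf, hnorm.trans (by rw [hx1, mul_one]; exact hM.le)⟩

theorem slanted_matrix_zero_approximate_eigenvalue
    (α : ℝ) (hα : 1 < α)
    (A : ℤ → ℤ → ℂ) (r : ℤ → ℝ) (hr0 : ∀ j, 0 ≤ r j)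
    (hr : ∀ m j : ℤ, ‖A m (⌈α * (m : ℝ)⌉ + j)‖ ≤ r j)
    (hSum : Summable r)
    (p : ℝ≥0∞) [hp : Fact (1 ≤ p)]
    (ε : ℝ) (hε : 0 < ε) :
    ∃ x : lp (fun _ : ℤ => ℂ) p, ‖x‖ = 1 ∧
      ∃ hf : (fun m : ℤ => ∑' n : ℤ, A m n * (x : ℤ → ℂ) n) ∈ lp (fun _ : ℤ => ℂ) p,
        ‖(⟨fun m : ℤ => ∑' n : ℤ, A m n * (x : ℤ → ℂ) n, hf⟩ :
            lp (fun _ : ℤ => ℂ) p)‖ ≤ ε :=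
  slanted_matrix_zero_approximate_eigenvalue_general α hα A r hr hSum p (hp := hp) ε hε
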